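/- For every R > ‖τ′‖_∞ the function n ↦ 𝔫(τ,R;n) is sub-multiplicative: for all n, m ≥ 1, 𝔫(τ,R;n+m) ≤ 𝔫(τ,R′_m;n) · 𝔫(τ,R;m) ≤ 𝔫(τ,R;n) · 𝔫(τ,R;m), where R′_m = ‖τ′‖_∞ + λ^{−m}(R − ‖τ′‖_∞). -/

import Mathlib

noncomputable section

open Filter Set Topology MeasureTheory

/-- The circle `ℝ/ℤ`. -/
abbrev 𝕊 : Type := UnitAddCircle

/-- The canonical representative in `[0,1)` of a point of the circle. -/
def rep (x : 𝕊) : ℝ := (AddCircle.equivIco 1 0 x : ℝ)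

/-- A `C^r` expanding map of the circle of degree `ℓ`, presented by a lift `ℝ → ℝ`,
together with the expansion constants `1 < λ ≤ Λ` bounding its derivative. -/
structure ExpMap (r : ℕ) (ℓ : ℕ) : Type where
  toFun : ℝ → ℝ
  contDiff : ContDiff ℝ r toFun
  degree : ∀ x : ℝ, toFun (x + 1) = toFun x + ℓ
  lam : ℝ
  Lam : ℝ
  one_lt_lam : 1 < lam
  lam_le_Lam : lam ≤ Lam
  lam_le_deriv : ∀ x : ℝ, lam ≤ deriv toFun x
  deriv_le_Lam : ∀ x : ℝ, deriv toFun x ≤ Lam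

/-- A real-valued `C^s` function on the circle, presented by a `1`-periodic lift. -/
structure CrFun (s : ℕ∞) : Type where
  toFun : ℝ → ℝ
  contDiff : ContDiff ℝ s toFun
  periodic : ∀ x : ℝ, toFun (x + 1) = toFun x

variable {r ℓ : ℕ}

/-- The induced map on the circle. -/
def ExpMap.map (E : ExpMap r ℓ) : 𝕊 → 𝕊 := fun x => ((E.toFun (rep x) : ℝ) : 𝕊)

/-- `(E^n)'(x)`, the derivative of the `n`-th iterate at a circle point. -/
def ExpMap.derivn (E : ExpMap r ℓ) (n : ℕ) (x : 𝕊) : ℝ := deriv (E.toFun^[n]) (rep x)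

/-- `‖τ'‖_∞`, the sup-norm of the derivative of `τ`. -/
def CrFun.dsup {s : ℕ∞} (τ : CrFun s) : ℝ :=
  sSup ((fun x => |deriv τ.toFun x|) '' Set.Icc (0:ℝ) 1)

/-- The skew product `f = f_{E,τ} : 𝕋² → 𝕋²`, `f(x,s) = (E x, s + τ x)`. -/
def skew (E : ExpMap r ℓ) {s : ℕ∞} (τ : CrFun s) : 𝕊 × 𝕊 → 𝕊 × 𝕊 :=
  fun z => (E.map z.1, z.2 + ((τ.toFun (rep z.1) : ℝ) : 𝕊))

/-- The Jacobian matrix `Df(z)`, depending only on the base coordinate. -/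
def Jac1 (E : ExpMap r ℓ) {s : ℕ∞} (τ : CrFun s) (x : 𝕊) : Matrix (Fin 2) (Fin 2) ℝ :=
  !![deriv E.toFun (rep x), 0; deriv τ.toFun (rep x), 1]

/-- The Jacobian matrix `Df^n(z)` of the `n`-th iterate. -/
def Jacn (E : ExpMap r ℓ) {s : ℕ∞} (τ : CrFun s) : ℕ → 𝕊 × 𝕊 → Matrix (Fin 2) (Fin 2) ℝ
  | 0, _ => 1
  | n+1, z => Jacn E τ n (skew E τ z) * Jac1 E τ z.1

/-- `Df^n` as a function of the base point only. -/
def JacnB (E : ExpMap r ℓ) {s : ℕ∞} (τ : CrFun s) (n : ℕ) (x : 𝕊) : Matrix (Fin 2) (Fin 2) ℝ :=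
  Jacn E τ n (x, (0 : 𝕊))

/-- The cone `K_R = {(ξ,η) : |η| ≤ ϑ_R |ξ|}` with `ϑ_R = R/(λ-1)`. -/
def ExpMap.cone (E : ExpMap r ℓ) (R : ℝ) : Set (Fin 2 → ℝ) :=
  {v | |v 1| ≤ R / (E.lam - 1) * |v 0|}

/-- A unit vector of `ℝ²`. -/
def IsUnitVec (v : Fin 2 → ℝ) : Prop := v 0 ^ 2 + v 1 ^ 2 = 1

/-- `𝔫(τ,R;n) = sup_z sup_v #{ζ ∈ f^{-n}(z) : v ∈ Df^n(ζ) K_R}`. -/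
def nQ (E : ExpMap r ℓ) {s : ℕ∞} (τ : CrFun s) (R : ℝ) (n : ℕ) : ℝ :=
  sSup {c : ℝ | ∃ (z : 𝕊 × 𝕊) (v : Fin 2 → ℝ), IsUnitVec v ∧
    c = ({ζ : 𝕊 × 𝕊 | (skew E τ)^[n] ζ = z ∧
      v ∈ (Jacn E τ n ζ).mulVec '' E.cone R}.ncard : ℝ)}

/-- `𝔫(τ) = lim_n 𝔫(τ,R;n)^{1/n}` (computed with the choice `R = ‖τ'‖_∞ + 1`). -/
def nlim (E : ExpMap r ℓ) {s : ℕ∞} (τ : CrFun s) : ℝ :=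
  limUnder atTop (fun n : ℕ => nQ E τ (τ.dsup + 1) n ^ ((n : ℝ)⁻¹))

/-- The `C^r` distance between two (lifts of) functions on the circle. -/
def crDist (r : ℕ) (f g : ℝ → ℝ) : ℝ :=
  sSup {c : ℝ | ∃ i ≤ r, ∃ x ∈ Set.Icc (0:ℝ) 1, c = |iteratedDeriv i f x - iteratedDeriv i g x|}

/-- `x_α`: the preimage point of `x` coded by the word `α = (α_n, …, α_1)`,
given the system `g` of inverse branches of `E`; here `α i` is the letter `α_{i+1}`. -/
def codePt (g : Fin ℓ → 𝕊 → 𝕊) : {n : ℕ} → (Fin n → Fin ℓ) → 𝕊 → 𝕊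
  | 0, _, x => x
  | n+1, α, x => g (α (Fin.last n)) (codePt g (fun i : Fin n => α i.castSucc) x)

/-- `[α]_p`, the truncation of a word to length `p`. -/
def trunc {ℓ n : ℕ} (α : Fin n → Fin ℓ) (p : ℕ) (h : p ≤ n) : Fin p → Fin ℓ :=
  fun i => α (Fin.castLE h i)

/-- `S_n(x;α;ψ) = Σ_{k=1}^n ψ'(x_{[α]_k}) / (E^k)'(x_{[α]_k})`. -/
def Ssum (E : ExpMap r ℓ) (g : Fin ℓ → 𝕊 → 𝕊) (ψ : ℝ → ℝ) {n : ℕ}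
    (α : Fin n → Fin ℓ) (x : 𝕊) : ℝ :=
  ∑ k : Fin n, deriv ψ (rep (codePt g (trunc α (k.1+1) k.isLt) x)) /
    E.derivn (k.1+1) (codePt g (trunc α (k.1+1) k.isLt) x)

/-- `S(x;ω) = Σ_{k=1}^∞ τ'(x_{[ω]_k}) / (E^k)'(x_{[ω]_k})` for an infinite word `ω`. -/
def Sinf (E : ExpMap r ℓ) (g : Fin ℓ → 𝕊 → 𝕊) (ψ : ℝ → ℝ) (y : 𝕊) (ω : ℕ → Fin ℓ) : ℝ :=
  ∑' k : ℕ, deriv ψ (rep (codePt g (fun i : Fin (k+1) => ω i) y)) /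
    E.derivn (k+1) (codePt g (fun i : Fin (k+1) => ω i) y)

/-- Faure's counting function `Ñ_{R̃}(n)`. -/
def Ntilde (E : ExpMap r ℓ) (g : Fin ℓ → 𝕊 → 𝕊) {s : ℕ∞} (τ : CrFun s) (Rt : ℝ) (n : ℕ) : ℝ :=
  sSup {c : ℝ | ∃ (y : 𝕊) (η : ℝ),
    c = ({α : Fin n → Fin ℓ | ∃ ω : ℕ → Fin ℓ, (∀ i : Fin n, ω i = α i) ∧
      |η - Sinf E g τ.toFun y ω| ≤ Rt * (E.derivn n (codePt g α y))⁻¹}.ncard : ℝ)}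

/-- `𝐧(τ,R;n)`. -/
def nnQ (E : ExpMap r ℓ) {s : ℕ∞} (τ : CrFun s) (R : ℝ) (n : ℕ) : ℝ :=
  sSup {c : ℝ | ∃ (z : 𝕊 × 𝕊) (v : Fin 2 → ℝ), IsUnitVec v ∧
    c = ∑ᶠ ζ ∈ {ζ : 𝕊 × 𝕊 | (skew E τ)^[n] ζ = z ∧
        v ∈ (Jacn E τ n ζ).mulVec '' E.cone R}, ((Jacn E τ n ζ).det)⁻¹}

/-- `𝐧(τ) = limsup_n 𝐧(τ,R;n)^{1/n}` (with `R = ‖τ'‖_∞ + 1`). -/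
def nnlim (E : ExpMap r ℓ) {s : ℕ∞} (τ : CrFun s) : ℝ :=
  limsup (fun n : ℕ => nnQ E τ (τ.dsup + 1) n ^ ((n : ℝ)⁻¹)) atTop

/-- `𝐦(τ,R;n)`. -/
def mmQ (E : ExpMap r ℓ) {s : ℕ∞} (τ : CrFun s) (R : ℝ) (n : ℕ) : ℝ :=
  sSup {c : ℝ | ∃ (z w : 𝕊 × 𝕊), (skew E τ)^[n] w = z ∧
    c = ∑ᶠ ζ ∈ {ζ : 𝕊 × 𝕊 | (skew E τ)^[n] ζ = z ∧
        ((Jacn E τ n ζ).mulVec '' E.cone R) ∩ ((Jacn E τ n w).mulVec '' E.cone R) = {0}},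
      ((Jacn E τ n ζ).det)⁻¹}

/-- `𝐦(τ) = limsup_n 𝐦(τ,R;n)^{1/n}` (with `R = ‖τ'‖_∞ + 1`). -/
def mmlim (E : ExpMap r ℓ) {s : ℕ∞} (τ : CrFun s) : ℝ :=
  limsup (fun n : ℕ => mmQ E τ (τ.dsup + 1) n ^ ((n : ℝ)⁻¹)) atTop

/-- `χ = lim_n (min_x (E^n)'(x))^{-1/n}`. -/
def chi (E : ExpMap r ℓ) : ℝ :=
  limUnder atTop (fun n : ℕ => (sInf (Set.range (E.derivn n))) ^ (-((n : ℝ)⁻¹)))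

/-- The Gram-determinant Jacobian `Jac(M) = √(det (M Mᵀ))` of a `p × m` matrix,
which equals the modulus of the Jacobian determinant of the restriction of the
associated linear map to the orthogonal complement of its kernel when the map is
surjective, and `0` otherwise. -/
def gramJac {p m : ℕ} (M : Matrix (Fin p) (Fin m) ℝ) : ℝ :=
  Real.sqrt (M * M.transpose).det

/-- The Jacobian of a linear map between Euclidean spaces. -/
def linJac {d e : ℕ} (L : EuclideanSpace ℝ (Fin d) →ₗ[ℝ] EuclideanSpace ℝ (Fin e)) : ℝ :=
  gramJac (LinearMap.toMatrix (EuclideanSpace.basisFun (Fin d) ℝ).toBasis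
    (EuclideanSpace.basisFun (Fin e) ℝ).toBasis L)


/-!
Writing `Df^n(ζ) = !![A, 0; B, 1]`, one has `A ≥ λ^n` and `|B| (λ - 1) ≤ ‖τ'‖ (A - 1)`, so
`Df^m(ζ)` maps `K_R` into `K_{R'_m}`. If `ζ ∈ f^{-(n+m)}(z)` is counted for the direction `v`,
then `ξ = f^m ζ` is counted in `𝔫(τ,R'_m;n)` for `v`, and `ζ` is counted among the `m`-th
preimages of `ξ` for the direction `Df^n(ξ)⁻¹ v`; summing over `ξ` gives the first inequality,
and `R'_m ≤ R` the second. Preimage sets have at most `(ℓ + 1)^n` points, so the suprema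
defining `𝔫` are finite (an unbounded `sSup` would be `0`).
-/

lemma rep_mem_Ico (x : 𝕊) : rep x ∈ Set.Ico (0 : ℝ) 1 := by
  simpa [rep] using (AddCircle.equivIco 1 0 x).2

lemma coe_rep (x : 𝕊) : ((rep x : ℝ) : 𝕊) = x :=
  (AddCircle.equivIco 1 0).symm_apply_apply x

lemma rep_injective : Function.Injective rep :=
  fun x y h => by rw [← coe_rep x, ← coe_rep y, h]

lemma exists_int_eq_sub_of_coe_eq {t a : ℝ} (h : (t : 𝕊) = (a : 𝕊)) : ∃ k : ℤ, t = a + k := by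
  obtain ⟨k, hk⟩ := (AddCircle.coe_eq_zero_iff (p := (1 : ℝ))).mp
    (by rw [AddCircle.coe_sub, h, sub_self] : ((t - a : ℝ) : 𝕊) = 0)
  exact ⟨k, by rw [zsmul_one] at hk; linarith⟩

section Counting

variable {ι α : Type*}

lemma ncard_biUnion_le_ncard_mul {t : Set ι} (ht : t.Finite) (s : ι → Set α) {K : ℝ}
    (hK : ∀ i ∈ t, ((s i).ncard : ℝ) ≤ K) : ((⋃ i ∈ t, s i).ncard : ℝ) ≤ t.ncard * K := by
  have hunion : (⋃ i ∈ t, s i) = ⋃ i ∈ ht.toFinset, s i := by simp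
  calc ((⋃ i ∈ t, s i).ncard : ℝ) ≤ ((∑ i ∈ ht.toFinset, (s i).ncard : ℕ) : ℝ) := by
        rw [hunion]
        exact_mod_cast ht.toFinset.set_ncard_biUnion_le s
    _ ≤ ht.toFinset.card • K := by
        push_cast
        exact Finset.sum_le_card_nsmul _ _ _ fun i hi => hK i (ht.mem_toFinset.mp hi)
    _ = t.ncard * K := by rw [nsmul_eq_mul, Set.ncard_eq_toFinset_card t ht]

lemma iterate_preimage_singleton_succ (f : α → α) (n : ℕ) (z : α) :
    f^[n + 1] ⁻¹' {z} = ⋃ w ∈ f^[n] ⁻¹' {z}, f ⁻¹' {w} := by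
  rw [Set.biUnion_preimage_singleton, Function.iterate_succ, Set.preimage_comp]

lemma finite_iterate_preimage_singleton {f : α → α} (hf : ∀ w, (f ⁻¹' {w}).Finite) (n : ℕ)
    (z : α) : (f^[n] ⁻¹' {z}).Finite := by
  induction n generalizing z with
  | zero => exact Set.finite_singleton z
  | succ n ih =>
    rw [iterate_preimage_singleton_succ]
    exact (ih z).biUnion fun w _ => hf w

lemma ncard_iterate_preimage_singleton_le {f : α → α} (hf : ∀ w, (f ⁻¹' {w}).Finite) {K : ℝ}
    (hK : ∀ w, ((f ⁻¹' {w}).ncard : ℝ) ≤ K) (n : ℕ) (z : α) :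
    ((f^[n] ⁻¹' {z}).ncard : ℝ) ≤ K ^ n := by
  have hK0 : 0 ≤ K := (Nat.cast_nonneg _).trans (hK z)
  induction n generalizing z with
  | zero => simp
  | succ n ih =>
    rw [iterate_preimage_singleton_succ, pow_succ]
    exact (ncard_biUnion_le_ncard_mul (finite_iterate_preimage_singleton hf n z) _
      fun w _ => hK w).trans (mul_le_mul_of_nonneg_right (ih z) hK0)

end Counting

section Fibers

variable {s : ℕ∞}

lemma ExpMap.strictMono (E : ExpMap r ℓ) : StrictMono E.toFun :=
  strictMono_of_deriv_pos fun x => (zero_lt_one.trans E.one_lt_lam).trans_le (E.lam_le_deriv x)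

/-- Lifting through `rep`, the preimages of `w` are points `a + k`, `a = rep w`, `k ∈ ℤ`, in
the interval `[E 0, E 0 + ℓ]`, which contains at most `ℓ + 1` of them. -/
lemma ExpMap.finite_and_ncard_map_preimage_le (E : ExpMap r ℓ) (w : 𝕊) :
    (E.map ⁻¹' {w}).Finite ∧ ((E.map ⁻¹' {w}).ncard : ℝ) ≤ ℓ + 1 := by
  set φ : 𝕊 → ℝ := fun x => E.toFun (rep x)
  have hφ : Set.InjOn φ (E.map ⁻¹' {w}) :=
    (E.strictMono.injective.comp rep_injective).injOn
  set k₀ : ℤ := ⌈E.toFun 0 - rep w⌉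
  set T : Set ℝ := (fun k : ℤ => rep w + k) '' Set.Icc k₀ (k₀ + ℓ)
  have hT : T.Finite := (Set.finite_Icc _ _).image _
  have hTcard : (T.ncard : ℝ) ≤ ℓ + 1 := by
    have hinj : Function.Injective fun k : ℤ => rep w + k :=
      fun k₁ k₂ h => by exact_mod_cast add_left_cancel h
    rw [Set.ncard_image_of_injective _ hinj, ← Finset.coe_Icc, Set.ncard_coe_finset,
      Int.card_Icc, show k₀ + ℓ + 1 - k₀ = (ℓ + 1 : ℕ) by push_cast; ring, Int.toNat_natCast]
    push_cast; rfl
  have hmaps : Set.MapsTo φ (E.map ⁻¹' {w}) T := by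
    intro x hx
    obtain ⟨k, hk⟩ : ∃ k : ℤ, φ x = rep w + k :=
      exists_int_eq_sub_of_coe_eq (hx.trans (coe_rep w).symm)
    have hlow : E.toFun 0 ≤ φ x := E.strictMono.monotone (rep_mem_Ico x).1
    have hup : φ x ≤ E.toFun 0 + ℓ := by
      rw [← E.degree 0, zero_add]
      exact E.strictMono.monotone (rep_mem_Ico x).2.le
    refine ⟨k, ⟨Int.ceil_le.mpr (by linarith), ?_⟩, hk.symm⟩
    have : E.toFun 0 - rep w ≤ k₀ := Int.le_ceil _
    exact_mod_cast (show (k : ℝ) ≤ k₀ + ℓ by linarith)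
  refine ⟨Set.Finite.of_injOn hmaps hφ hT, ?_⟩
  exact (Nat.cast_le.mpr (Set.ncard_le_ncard_of_injOn φ hmaps hφ hT)).trans hTcard

lemma skew_preimage_injOn_fst (E : ExpMap r ℓ) (τ : CrFun s) (w : 𝕊 × 𝕊) :
    Set.InjOn Prod.fst (skew E τ ⁻¹' {w}) := by
  rintro ⟨x, s₁⟩ h₁ ⟨x', s₂⟩ h₂ (rfl : x = x')
  have := (Prod.ext_iff.mp (h₁.trans h₂.symm)).2
  simp only [skew, add_left_inj] at this
  rw [this]

lemma skew_preimage_mapsTo (E : ExpMap r ℓ) (τ : CrFun s) (w : 𝕊 × 𝕊) :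
    Set.MapsTo Prod.fst (skew E τ ⁻¹' {w}) (E.map ⁻¹' {w.1}) :=
  fun _ h => congrArg Prod.fst h

lemma finite_skew_preimage (E : ExpMap r ℓ) (τ : CrFun s) (w : 𝕊 × 𝕊) :
    (skew E τ ⁻¹' {w}).Finite :=
  Set.Finite.of_injOn (skew_preimage_mapsTo E τ w) (skew_preimage_injOn_fst E τ w)
    (E.finite_and_ncard_map_preimage_le w.1).1

lemma ncard_skew_preimage_le (E : ExpMap r ℓ) (τ : CrFun s) (w : 𝕊 × 𝕊) :
    ((skew E τ ⁻¹' {w}).ncard : ℝ) ≤ ℓ + 1 := by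
  obtain ⟨hfin, hcard⟩ := E.finite_and_ncard_map_preimage_le w.1
  exact (Nat.cast_le.mpr (Set.ncard_le_ncard_of_injOn _ (skew_preimage_mapsTo E τ w)
    (skew_preimage_injOn_fst E τ w) hfin)).trans hcard

end Fibers

section Jacobian

variable {s : ℕ∞}

lemma CrFun.abs_deriv_rep_le_dsup (τ : CrFun s) (hs : 1 ≤ s) (x : 𝕊) :
    |deriv τ.toFun (rep x)| ≤ τ.dsup :=
  le_csSup (isCompact_Icc.bddAbove_image
      ((τ.contDiff.continuous_deriv (by exact_mod_cast hs)).abs.continuousOn))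
    ⟨rep x, Set.Ico_subset_Icc_self (rep_mem_Ico x), rfl⟩

lemma Jacn_add (E : ExpMap r ℓ) (τ : CrFun s) (a b : ℕ) (ζ : 𝕊 × 𝕊) :
    Jacn E τ (a + b) ζ = Jacn E τ a ((skew E τ)^[b] ζ) * Jacn E τ b ζ := by
  induction b generalizing ζ with
  | zero => simp [Jacn]
  | succ b ih =>
    rw [← add_assoc, Jacn, ih, Jacn, Function.iterate_succ_apply, Matrix.mul_assoc]

lemma lam_pow_succ_le_and_abs_le_of_step {lam d A B a b : ℝ} {n : ℕ} (hlam : 1 < lam)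
    (hA : lam ^ n ≤ A) (hB : |B| * (lam - 1) ≤ d * (A - 1)) (ha : lam ≤ a) (hb : |b| ≤ d) :
    lam ^ (n + 1) ≤ A * a ∧ |B * a + b| * (lam - 1) ≤ d * (A * a - 1) := by
  have hA₁ : 1 ≤ A := (one_le_pow₀ hlam.le).trans hA
  refine ⟨pow_succ lam n ▸ mul_le_mul hA ha (by linarith) (by linarith), ?_⟩
  have hBa : |B * a + b| ≤ |B| * a + |b| := by
    simpa [abs_mul, abs_of_pos (by linarith : 0 < a)] using abs_add_le (B * a) b
  have hd : 0 ≤ d := (abs_nonneg b).trans hb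
  nlinarith [mul_le_mul_of_nonneg_right hBa (by linarith : (0 : ℝ) ≤ lam - 1),
    mul_le_mul_of_nonneg_right hb (by linarith : (0 : ℝ) ≤ lam - 1),
    mul_le_mul_of_nonneg_right hB (by linarith : (0 : ℝ) ≤ a), mul_nonneg hd (sub_nonneg.mpr ha)]

/-- The bound on `B` is the geometric sum
`|B| ≤ ‖τ'‖ (1 + a₁ + a₁a₂ + ⋯) ≤ ‖τ'‖ (A - 1)/(λ - 1)` written without division. -/
lemma exists_Jacn_eq (E : ExpMap r ℓ) (τ : CrFun s) (hs : 1 ≤ s) (n : ℕ) (ζ : 𝕊 × 𝕊) :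
    ∃ A B : ℝ, Jacn E τ n ζ = !![A, 0; B, 1] ∧ E.lam ^ n ≤ A ∧
      |B| * (E.lam - 1) ≤ τ.dsup * (A - 1) := by
  induction n generalizing ζ with
  | zero => exact ⟨1, 0, by simp [Jacn, Matrix.one_fin_two], by simp, by simp⟩
  | succ n ih =>
    obtain ⟨A, B, hJ, hA, hB⟩ := ih (skew E τ ζ)
    refine ⟨A * deriv E.toFun (rep ζ.1), B * deriv E.toFun (rep ζ.1) + deriv τ.toFun (rep ζ.1),
      by simp [Jacn, hJ, Jac1], ?_⟩
    exact lam_pow_succ_le_and_abs_le_of_step E.one_lt_lam hA hB (E.lam_le_deriv _)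
      (τ.abs_deriv_rep_le_dsup hs ζ.1)

lemma isUnit_det_Jacn (E : ExpMap r ℓ) (τ : CrFun s) (hs : 1 ≤ s) (n : ℕ) (ζ : 𝕊 × 𝕊) :
    IsUnit (Jacn E τ n ζ).det := by
  obtain ⟨A, B, hJ, hA, -⟩ := exists_Jacn_eq E τ hs n ζ
  rw [hJ, Matrix.det_fin_two_of, mul_one, zero_mul, sub_zero, isUnit_iff_ne_zero]
  exact (pow_pos (zero_lt_one.trans E.one_lt_lam) n).trans_le hA |>.ne'

end Jacobian

section Cone

variable {s : ℕ∞}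

lemma ExpMap.cone_mono (E : ExpMap r ℓ) {R' R : ℝ} (h : R' ≤ R) : E.cone R' ⊆ E.cone R :=
  fun _ hv => hv.trans <| mul_le_mul_of_nonneg_right
    (div_le_div_of_nonneg_right h (by linarith [E.one_lt_lam])) (abs_nonneg _)

lemma ExpMap.smul_mem_cone (E : ExpMap r ℓ) {R : ℝ} {v : Fin 2 → ℝ} (hv : v ∈ E.cone R) (c : ℝ) :
    c • v ∈ E.cone R := by
  change |c * v 1| ≤ R / (E.lam - 1) * |c * v 0|
  rw [abs_mul, abs_mul, mul_left_comm]
  exact mul_le_mul_of_nonneg_left hv (abs_nonneg c)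

/-- The defect `R - ‖τ'‖` shrinks by the factor `A⁻¹ ≤ λ⁻ᵐ`. -/
lemma Jacn_mulVec_mem_cone (E : ExpMap r ℓ) (τ : CrFun s) (hs : 1 ≤ s) {R : ℝ}
    (hR : τ.dsup ≤ R) (m : ℕ) (ζ : 𝕊 × 𝕊) {v : Fin 2 → ℝ} (hv : v ∈ E.cone R) :
    (Jacn E τ m ζ).mulVec v ∈ E.cone (τ.dsup + E.lam ^ (-(m : ℤ)) * (R - τ.dsup)) := by
  obtain ⟨A, B, hJ, hA, hB⟩ := exists_Jacn_eq E τ hs m ζ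
  have hlam : 0 < E.lam - 1 := by linarith [E.one_lt_lam]
  have hlamm : 0 < E.lam ^ m := pow_pos (by linarith) m
  have hAlam : 1 ≤ E.lam ^ (-(m : ℤ)) * A := by
    rw [zpow_neg, zpow_natCast, inv_mul_eq_div, one_le_div hlamm]
    exact hA
  have hv' : |v 1| * (E.lam - 1) ≤ R * |v 0| := by
    have := mul_le_mul_of_nonneg_right (show |v 1| ≤ R / (E.lam - 1) * |v 0| from hv) hlam.le
    rwa [div_mul_eq_mul_div, div_mul_cancel₀ _ hlam.ne'] at this
  rw [hJ, Matrix.mulVec_fin_two]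
  change |B * v 0 + 1 * v 1| ≤ _ / (E.lam - 1) * |A * v 0 + 0 * v 1|
  rw [one_mul, zero_mul, add_zero, abs_mul A, abs_of_pos (hlamm.trans_le hA), div_mul_eq_mul_div,
    le_div_iff₀ hlam]
  nlinarith [abs_add_le (B * v 0) (v 1), abs_mul B (v 0), abs_nonneg B, abs_nonneg (v 0),
    mul_le_mul_of_nonneg_right hAlam (mul_nonneg (sub_nonneg.mpr hR) (abs_nonneg (v 0)))]

lemma contracted_radius_le (E : ExpMap r ℓ) {d R : ℝ} (hR : d ≤ R) (m : ℕ) :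
    d + E.lam ^ (-(m : ℤ)) * (R - d) ≤ R := by
  have : E.lam ^ (-(m : ℤ)) ≤ 1 := zpow_le_one_of_nonpos₀ E.one_lt_lam.le (by simp)
  nlinarith

end Cone

section ConeFiber

variable {s : ℕ∞}

def coneFiber (E : ExpMap r ℓ) (τ : CrFun s) (R : ℝ) (n : ℕ) (z : 𝕊 × 𝕊) (v : Fin 2 → ℝ) :
    Set (𝕊 × 𝕊) :=
  {ζ | (skew E τ)^[n] ζ = z ∧ v ∈ (Jacn E τ n ζ).mulVec '' E.cone R}

lemma coneFiber_subset_preimage (E : ExpMap r ℓ) (τ : CrFun s) (R : ℝ) (n : ℕ) (z : 𝕊 × 𝕊)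
    (v : Fin 2 → ℝ) : coneFiber E τ R n z v ⊆ (skew E τ)^[n] ⁻¹' {z} :=
  fun _ h => h.1

lemma finite_coneFiber (E : ExpMap r ℓ) (τ : CrFun s) (R : ℝ) (n : ℕ) (z : 𝕊 × 𝕊)
    (v : Fin 2 → ℝ) : (coneFiber E τ R n z v).Finite :=
  (finite_iterate_preimage_singleton (finite_skew_preimage E τ) n z).subset
    (coneFiber_subset_preimage E τ R n z v)

lemma ncard_coneFiber_le (E : ExpMap r ℓ) (τ : CrFun s) (R : ℝ) (n : ℕ) (z : 𝕊 × 𝕊)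
    (v : Fin 2 → ℝ) : ((coneFiber E τ R n z v).ncard : ℝ) ≤ ((ℓ : ℝ) + 1) ^ n :=
  (Nat.cast_le.mpr (Set.ncard_le_ncard (coneFiber_subset_preimage E τ R n z v)
    (finite_iterate_preimage_singleton (finite_skew_preimage E τ) n z))).trans
    (ncard_iterate_preimage_singleton_le (finite_skew_preimage E τ)
      (ncard_skew_preimage_le E τ) n z)

lemma coneFiber_subset_smul (E : ExpMap r ℓ) (τ : CrFun s) (R : ℝ) (n : ℕ) (z : 𝕊 × 𝕊)
    (v : Fin 2 → ℝ) (c : ℝ) : coneFiber E τ R n z v ⊆ coneFiber E τ R n z (c • v) := by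
  rintro ζ ⟨hζ, u, hu, rfl⟩
  exact ⟨hζ, c • u, E.smul_mem_cone hu c, Matrix.mulVec_smul _ c u⟩

lemma exists_isUnitVec_smul {v : Fin 2 → ℝ} (hv : v ≠ 0) : ∃ c : ℝ, IsUnitVec (c • v) := by
  have hpos : 0 < v 0 ^ 2 + v 1 ^ 2 := by
    by_contra! h
    refine hv (funext fun i => ?_)
    fin_cases i <;> simp <;> nlinarith [sq_nonneg (v 0), sq_nonneg (v 1)]
  refine ⟨(Real.sqrt (v 0 ^ 2 + v 1 ^ 2))⁻¹, ?_⟩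
  change (_ * v 0) ^ 2 + (_ * v 1) ^ 2 = 1
  rw [mul_pow, mul_pow, ← mul_add, inv_pow, Real.sq_sqrt hpos.le, inv_mul_cancel₀ hpos.ne']

lemma nQ_eq_sSup (E : ExpMap r ℓ) (τ : CrFun s) (R : ℝ) (n : ℕ) :
    nQ E τ R n = sSup {c : ℝ | ∃ (z : 𝕊 × 𝕊) (v : Fin 2 → ℝ), IsUnitVec v ∧
      c = ((coneFiber E τ R n z v).ncard : ℝ)} :=
  rfl

lemma bddAbove_nQ_set (E : ExpMap r ℓ) (τ : CrFun s) (R : ℝ) (n : ℕ) :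
    BddAbove {c : ℝ | ∃ (z : 𝕊 × 𝕊) (v : Fin 2 → ℝ), IsUnitVec v ∧
      c = ((coneFiber E τ R n z v).ncard : ℝ)} :=
  ⟨((ℓ : ℝ) + 1) ^ n, by rintro _ ⟨z, v, -, rfl⟩; exact ncard_coneFiber_le E τ R n z v⟩

lemma ncard_coneFiber_le_nQ (E : ExpMap r ℓ) (τ : CrFun s) (R : ℝ) (n : ℕ) (z : 𝕊 × 𝕊)
    {v : Fin 2 → ℝ} (hv : v ≠ 0) : ((coneFiber E τ R n z v).ncard : ℝ) ≤ nQ E τ R n := by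
  obtain ⟨c, hc⟩ := exists_isUnitVec_smul hv
  rw [nQ_eq_sSup]
  exact (Nat.cast_le.mpr (Set.ncard_le_ncard (coneFiber_subset_smul E τ R n z v c)
    (finite_coneFiber E τ R n z _))).trans (le_csSup (bddAbove_nQ_set E τ R n) ⟨z, _, hc, rfl⟩)

lemma nQ_nonneg (E : ExpMap r ℓ) (τ : CrFun s) (R : ℝ) (n : ℕ) : 0 ≤ nQ E τ R n :=
  Real.sSup_nonneg fun _ ⟨_, _, _, hc⟩ => hc ▸ Nat.cast_nonneg _

lemma IsUnitVec.ne_zero {v : Fin 2 → ℝ} (hv : IsUnitVec v) : v ≠ 0 := by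
  rintro rfl
  simp [IsUnitVec] at hv

lemma nQ_le_of_forall_ncard_le (E : ExpMap r ℓ) (τ : CrFun s) (R : ℝ) (n : ℕ) {K : ℝ}
    (h : ∀ z v, v ≠ 0 → ((coneFiber E τ R n z v).ncard : ℝ) ≤ K) : nQ E τ R n ≤ K := by
  rw [nQ_eq_sSup]
  exact csSup_le ⟨_, (0, 0), ![1, 0], by simp [IsUnitVec], rfl⟩
    fun _ ⟨z, v, hv, hc⟩ => hc ▸ h z v hv.ne_zero

lemma nQ_mono (E : ExpMap r ℓ) (τ : CrFun s) {R' R : ℝ} (h : R' ≤ R) (n : ℕ) :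
    nQ E τ R' n ≤ nQ E τ R n := by
  refine nQ_le_of_forall_ncard_le E τ R' n fun z v hv => ?_
  have hsub : coneFiber E τ R' n z v ⊆ coneFiber E τ R n z v :=
    fun _ hζ => ⟨hζ.1, Set.image_mono (E.cone_mono h) hζ.2⟩
  exact (Nat.cast_le.mpr (Set.ncard_le_ncard hsub (finite_coneFiber E τ R n z v))).trans
    (ncard_coneFiber_le_nQ E τ R n z hv)

end ConeFiber

section Submultiplicativity

variable {s : ℕ∞}

lemma coneFiber_add_subset (E : ExpMap r ℓ) (τ : CrFun s) (hs : 1 ≤ s) {R : ℝ} (hR : τ.dsup ≤ R)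
    (n m : ℕ) (z : 𝕊 × 𝕊) (v : Fin 2 → ℝ) :
    coneFiber E τ R (n + m) z v ⊆
      ⋃ ξ ∈ coneFiber E τ (τ.dsup + E.lam ^ (-(m : ℤ)) * (R - τ.dsup)) n z v,
        coneFiber E τ R m ξ ((Jacn E τ n ξ)⁻¹.mulVec v) := by
  rintro ζ ⟨hζ, u, hu, rfl⟩
  have hJ := Jacn_add E τ n m ζ
  refine Set.mem_biUnion (x := (skew E τ)^[m] ζ) ⟨?_, _, Jacn_mulVec_mem_cone E τ hs hR m ζ hu, ?_⟩
    ⟨rfl, u, hu, ?_⟩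
  · rwa [← Function.iterate_add_apply]
  · rw [Matrix.mulVec_mulVec, hJ]
  · rw [hJ, ← Matrix.mulVec_mulVec, Matrix.mulVec_mulVec _ _⁻¹,
      Matrix.nonsing_inv_mul _ (isUnit_det_Jacn E τ hs n _), Matrix.one_mulVec]

lemma ncard_coneFiber_add_le (E : ExpMap r ℓ) (τ : CrFun s) (hs : 1 ≤ s) {R : ℝ}
    (hR : τ.dsup ≤ R) (n m : ℕ) (z : 𝕊 × 𝕊) {v : Fin 2 → ℝ} (hv : v ≠ 0) :
    ((coneFiber E τ R (n + m) z v).ncard : ℝ) ≤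
      nQ E τ (τ.dsup + E.lam ^ (-(m : ℤ)) * (R - τ.dsup)) n * nQ E τ R m := by
  set R' := τ.dsup + E.lam ^ (-(m : ℤ)) * (R - τ.dsup)
  have hfin := finite_coneFiber E τ R' n z v
  have hdir : ∀ ξ, (Jacn E τ n ξ)⁻¹.mulVec v ≠ 0 := fun ξ h => hv <| by
    rw [← Matrix.one_mulVec v, ← Matrix.mul_nonsing_inv _ (isUnit_det_Jacn E τ hs n ξ),
      ← Matrix.mulVec_mulVec, h, Matrix.mulVec_zero]
  calc ((coneFiber E τ R (n + m) z v).ncard : ℝ)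
      ≤ ((⋃ ξ ∈ coneFiber E τ R' n z v, coneFiber E τ R m ξ ((Jacn E τ n ξ)⁻¹.mulVec v)).ncard :
          ℝ) :=
        Nat.cast_le.mpr <| Set.ncard_le_ncard (coneFiber_add_subset E τ hs hR n m z v)
          (hfin.biUnion fun ξ _ => finite_coneFiber E τ R m ξ _)
    _ ≤ (coneFiber E τ R' n z v).ncard * nQ E τ R m :=
        ncard_biUnion_le_ncard_mul hfin _ fun ξ _ => ncard_coneFiber_le_nQ E τ R m ξ (hdir ξ)
    _ ≤ nQ E τ R' n * nQ E τ R m :=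
        mul_le_mul_of_nonneg_right (ncard_coneFiber_le_nQ E τ R' n z hv) (nQ_nonneg E τ R m)

end Submultiplicativity

theorem stmt3_general (r ℓ : ℕ) (hr : 2 ≤ r) (E : ExpMap r ℓ) (τ : CrFun r)
    (R : ℝ) (hR : τ.dsup < R) (n m : ℕ) :
    nQ E τ R (n + m) ≤
        nQ E τ (τ.dsup + E.lam ^ (-(m : ℤ)) * (R - τ.dsup)) n * nQ E τ R m ∧
      nQ E τ (τ.dsup + E.lam ^ (-(m : ℤ)) * (R - τ.dsup)) n * nQ E τ R m ≤
        nQ E τ R n * nQ E τ R m := by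
  have hs : (1 : ℕ∞) ≤ r := by exact_mod_cast one_le_two.trans hr
  constructor
  · exact nQ_le_of_forall_ncard_le E τ R (n + m) fun z _ hv =>
      ncard_coneFiber_add_le E τ hs hR.le n m z hv
  · exact mul_le_mul_of_nonneg_right (nQ_mono E τ (contracted_radius_le E hR.le m) n)
      (nQ_nonneg E τ R m)

/-- For every `R > ‖τ'‖_∞`, the function `n ↦ 𝔫(τ,R;n)` is
sub-multiplicative: for all `n, m ≥ 1`,
`𝔫(τ,R;n+m) ≤ 𝔫(τ,R'_m;n) ⬝ 𝔫(τ,R;m) ≤ 𝔫(τ,R;n) ⬝ 𝔫(τ,R;m)`,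
where `R'_m = ‖τ'‖_∞ + λ^{-m}(R - ‖τ'‖_∞)`. -/
theorem stmt3 (r ℓ : ℕ) (hr : 2 ≤ r) (hl : 2 ≤ ℓ) (E : ExpMap r ℓ) (τ : CrFun r)
    (R : ℝ) (hR : τ.dsup < R) (n m : ℕ) (hn : 1 ≤ n) (hm : 1 ≤ m) :
    nQ E τ R (n + m) ≤
        nQ E τ (τ.dsup + E.lam ^ (-(m : ℤ)) * (R - τ.dsup)) n * nQ E τ R m ∧
      nQ E τ (τ.dsup + E.lam ^ (-(m : ℤ)) * (R - τ.dsup)) n * nQ E τ R m ≤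
        nQ E τ R n * nQ E τ R m :=
  stmt3_general r ℓ hr E τ R hR n m
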